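/- arXiv:1808.01498 — 3 statements merged into one kernel-verified Lean document; each statement's English description precedes it below -/
import Mathlib

section
/- Let N, M : A → B be quantum channels, let Λ : C → A⊗E be a quantum channel (pre-processing), and let Ω : B⊗E → D be a quantum channel (post-processing), and define the superchannel Θ acting on channels from A to B by Θ(Ψ) := Ω ∘ (Ψ ⊗ id_E) ∘ Λ, a channel from C to D. Then for any generalized divergence D, the amortized channel divergence obeys data processing under the superchannel: D^A(N‖M) ≥ D^A(Θ(N)‖Θ(M)). -/
open scoped BigOperators ComplexOrder

noncomputable section

attribute [local instance] Classical.propDecidable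

/-- A density matrix (quantum state): positive semidefinite with unit trace. -/
def IsDensity {ι : Type} [Fintype ι] (ρ : Matrix ι ι ℂ) : Prop :=
  ρ.PosSemidef ∧ ρ.trace = 1

/-- The map `id_R ⊗ Φ` (for linear `Φ`), defined blockwise. -/
def idTensor {R ι κ : Type} (Φ : Matrix ι ι ℂ → Matrix κ κ ℂ)
    (X : Matrix (R × ι) (R × ι) ℂ) : Matrix (R × κ) (R × κ) ℂ :=
  fun p q => Φ (fun a b => X (p.1, a) (q.1, b)) p.2 q.2

/-- The map `Φ ⊗ id_E` (for linear `Φ`), defined blockwise. -/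
def tensorId {ι κ E : Type} (Φ : Matrix ι ι ℂ → Matrix κ κ ℂ)
    (X : Matrix (ι × E) (ι × E) ℂ) : Matrix (κ × E) (κ × E) ℂ :=
  fun p q => Φ (fun a b => X (a, p.2) (b, q.2)) p.1 q.1

/-- A quantum channel: linear, trace preserving, and completely positive. -/
structure IsChannel {ι κ : Type} [Fintype ι] [Fintype κ]
    (Φ : Matrix ι ι ℂ → Matrix κ κ ℂ) : Prop where
  linear : IsLinearMap ℂ Φ
  tracePres : ∀ X, (Φ X).trace = X.trace
  compPos : ∀ (k : ℕ) (X : Matrix (Fin k × ι) (Fin k × ι) ℂ),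
      X.PosSemidef → (idTensor Φ X).PosSemidef

/-- A family of divergences, one for every finite dimension. -/
abbrev DivFam : Type 1 :=
  ∀ (ι : Type) [Fintype ι] [DecidableEq ι], Matrix ι ι ℂ → Matrix ι ι ℂ → EReal

/-- Data processing: a generalized divergence does not increase under channels. -/
def DivDataProcessing (D : DivFam) : Prop :=
  ∀ (ι κ : Type) [Fintype ι] [DecidableEq ι] [Fintype κ] [DecidableEq κ]
    (Φ : Matrix ι ι ℂ → Matrix κ κ ℂ), IsChannel Φ →
    ∀ ρ σ : Matrix ι ι ℂ, IsDensity ρ → IsDensity σ →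
      D κ (Φ ρ) (Φ σ) ≤ D ι ρ σ

/-- Faithfulness: `D(ρ‖ρ) ≤ 0` for every state `ρ`. -/
def DivFaithful (D : DivFam) : Prop :=
  ∀ (ι : Type) [Fintype ι] [DecidableEq ι] (ρ : Matrix ι ι ℂ),
    IsDensity ρ → D ι ρ ρ ≤ 0

/-- Strong faithfulness: `D(ρ‖σ) = 0` iff `ρ = σ`. -/
def DivStronglyFaithful (D : DivFam) : Prop :=
  ∀ (ι : Type) [Fintype ι] [DecidableEq ι] (ρ σ : Matrix ι ι ℂ),
    IsDensity ρ → IsDensity σ → (D ι ρ σ = 0 ↔ ρ = σ)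

/-- The generalized channel divergence `D(N‖M)`. -/
def channelDiv (D : DivFam) {ι κ : Type} [Fintype ι] [DecidableEq ι] [Fintype κ] [DecidableEq κ]
    (N M : Matrix ι ι ℂ → Matrix κ κ ℂ) : EReal :=
  ⨆ (R : ℕ) (ρ : Matrix (Fin R × ι) (Fin R × ι) ℂ) (_ : IsDensity ρ),
    D (Fin R × κ) (idTensor N ρ) (idTensor M ρ)

/-- The amortized channel divergence `D^𝒜(N‖M)`. -/
def amortizedDiv (D : DivFam) {ι κ : Type} [Fintype ι] [DecidableEq ι] [Fintype κ] [DecidableEq κ]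
    (N M : Matrix ι ι ℂ → Matrix κ κ ℂ) : EReal :=
  ⨆ (R : ℕ) (ρ : Matrix (Fin R × ι) (Fin R × ι) ℂ) (σ : Matrix (Fin R × ι) (Fin R × ι) ℂ)
    (_ : IsDensity ρ) (_ : IsDensity σ),
      D (Fin R × κ) (idTensor N ρ) (idTensor M σ) - D (Fin R × ι) ρ σ

/-- Apply a real function to a Hermitian matrix via the spectral decomposition. -/
def hermFun {ι : Type} [Fintype ι] [DecidableEq ι] (f : ℝ → ℝ) (A : Matrix ι ι ℂ) :
    Matrix ι ι ℂ :=
  if hA : A.IsHermitian then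
    (hA.eigenvectorUnitary : Matrix ι ι ℂ) *
      Matrix.diagonal (fun i => (f (hA.eigenvalues i) : ℂ)) *
      star (hA.eigenvectorUnitary : Matrix ι ι ℂ)
  else 0

/-- Real matrix power via spectral calculus, with the generalized-inverse convention `0 ↦ 0`. -/
def matPow {ι : Type} [Fintype ι] [DecidableEq ι] (A : Matrix ι ι ℂ) (r : ℝ) : Matrix ι ι ℂ :=
  hermFun (fun x => if x = 0 then 0 else Real.rpow x r) A

/-- Matrix base-2 logarithm via spectral calculus, taken on the support. -/
def matLog2 {ι : Type} [Fintype ι] [DecidableEq ι] (A : Matrix ι ι ℂ) : Matrix ι ι ℂ :=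
  hermFun (fun x => if x = 0 then 0 else Real.logb 2 x) A

/-- The projection onto the support of a Hermitian matrix. -/
def suppProj {ι : Type} [Fintype ι] [DecidableEq ι] (A : Matrix ι ι ℂ) : Matrix ι ι ℂ :=
  hermFun (fun x => if x = 0 then 0 else 1) A

/-- `supp ρ ⊆ supp σ`, expressed (for Hermitian matrices) as kernel containment
`ker σ ⊆ ker ρ`. -/
def suppLE {ι : Type} [Fintype ι] (ρ σ : Matrix ι ι ℂ) : Prop :=
  ∀ v : ι → ℂ, σ.mulVec v = 0 → ρ.mulVec v = 0

/-- The quantum relative entropy `D(ρ‖σ) = Tr[ρ(log₂ρ − log₂σ)]`,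
`+∞` if the support condition fails. -/
def relEnt {ι : Type} [Fintype ι] [DecidableEq ι] (ρ σ : Matrix ι ι ℂ) : EReal :=
  if suppLE ρ σ then (((ρ * (matLog2 ρ - matLog2 σ)).trace).re : EReal) else ⊤

/-- `−log₂ x` as an extended real, with `−log₂ 0 = +∞`. -/
def negLog2 (x : ℝ) : EReal :=
  if x ≤ 0 then ⊤ else ((-Real.logb 2 x : ℝ) : EReal)

/-- The max-relative entropy `D_max(ρ‖σ) = inf{λ : ρ ≤ 2^λ σ}` (Loewner order). -/
def Dmax {ι : Type} [Fintype ι] (ρ σ : Matrix ι ι ℂ) : EReal :=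
  ⨅ (l : ℝ) (_ : (((2 : ℝ) ^ l) • σ - ρ).PosSemidef), (l : EReal)

/-- The sandwiched Rényi divergence `D̃_α`. -/
def sandRenyi {ι : Type} [Fintype ι] [DecidableEq ι] (α : ℝ) (ρ σ : Matrix ι ι ℂ) : EReal :=
  if α = 1 then relEnt ρ σ
  else if 1 < α ∧ ¬ suppLE ρ σ then ⊤
  else if α < 1 ∧ (ρ * σ).trace = 0 then ⊤
  else ((((α - 1)⁻¹ *
      Real.logb 2
        (((matPow (matPow σ ((1 - α) / (2 * α)) * ρ * matPow σ ((1 - α) / (2 * α))) α).trace).re)) :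
        ℝ) : EReal)

/-- The Petz–Rényi divergence `D_α`. -/
def petzRenyi {ι : Type} [Fintype ι] [DecidableEq ι] (α : ℝ) (ρ σ : Matrix ι ι ℂ) : EReal :=
  if α = 0 then negLog2 (((suppProj ρ * σ).trace).re)
  else if α = 1 then relEnt ρ σ
  else if 1 < α ∧ ¬ suppLE ρ σ then ⊤
  else if α < 1 ∧ (ρ * σ).trace = 0 then ⊤
  else ((((α - 1)⁻¹ * Real.logb 2 (((matPow ρ α * matPow σ (1 - α)).trace).re)) : ℝ) : EReal)

/-- The trace norm `‖X‖₁ = Tr √(XᴴX)`. -/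
def traceNorm {ι : Type} [Fintype ι] [DecidableEq ι] (X : Matrix ι ι ℂ) : ℝ :=
  ((matPow (X.conjTranspose * X) (1/2 : ℝ)).trace).re

/-- The fidelity `F(ρ,σ) = ‖√ρ√σ‖₁²`. -/
def matFidelity {ι : Type} [Fintype ι] [DecidableEq ι] (ρ σ : Matrix ι ι ℂ) : ℝ :=
  (traceNorm (matPow ρ (1/2 : ℝ) * matPow σ (1/2 : ℝ))) ^ 2

def relEntFam : DivFam := fun _ _ _ ρ σ => relEnt ρ σ
def DmaxFam : DivFam := fun _ _ _ ρ σ => Dmax ρ σ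
def sandFam (α : ℝ) : DivFam := fun _ _ _ ρ σ => sandRenyi α ρ σ
def petzFam (α : ℝ) : DivFam := fun _ _ _ ρ σ => petzRenyi α ρ σ
/-- `D̃_{1/2}(ρ‖σ) = −log₂ F(ρ,σ)` as a divergence family. -/
def fidDivFam : DivFam := fun _ _ _ ρ σ => negLog2 (matFidelity ρ σ)

/-- The classical-quantum state `Σ_x p(x) |x⟩⟨x| ⊗ ρ^x`. -/
def cqState {X ι : Type} [DecidableEq X] (p : X → ℝ) (ρ : X → Matrix ι ι ℂ) :
    Matrix (X × ι) (X × ι) ℂ :=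
  fun a b => if a.1 = b.1 then (p a.1 : ℂ) * ρ a.1 a.2 b.2 else 0

/-- The direct-sum property of a generalized divergence on classical-quantum states. -/
def DivDirectSum (D : DivFam) : Prop :=
  ∀ (X ι : Type) [Fintype X] [DecidableEq X] [Fintype ι] [DecidableEq ι]
    (p : X → ℝ), (∀ x, 0 ≤ p x) → (∑ x, p x = 1) →
    ∀ (ρ σ : X → Matrix ι ι ℂ), (∀ x, IsDensity (ρ x)) → (∀ x, IsDensity (σ x)) →
      D (X × ι) (cqState p ρ) (cqState p σ) = ∑ x, (p x : EReal) * D ι (ρ x) (σ x)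

/-- The Kronecker (tensor) product of square matrices. -/
def mkron {ι E : Type} (A : Matrix ι ι ℂ) (B : Matrix E E ℂ) : Matrix (ι × E) (ι × E) ℂ :=
  fun p q => A p.1 q.1 * B p.2 q.2

/-- Sub-additivity of a divergence with respect to tensor-product states. -/
def DivSubAdditive (D : DivFam) : Prop :=
  ∀ (ι E : Type) [Fintype ι] [DecidableEq ι] [Fintype E] [DecidableEq E]
    (ρ σ : Matrix ι ι ℂ) (ω τ : Matrix E E ℂ),
    IsDensity ρ → IsDensity σ → IsDensity ω → IsDensity τ →
      D (ι × E) (mkron ρ ω) (mkron σ τ) ≤ D ι ρ σ + D E ω τ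

/-- The classical-quantum channel `ρ ↦ Σ_x ⟨x|ρ|x⟩ ν^x`. -/
def cqChannel {X κ : Type} [Fintype X] [Fintype κ] (ν : X → Matrix κ κ ℂ) :
    Matrix X X ℂ → Matrix κ κ ℂ :=
  fun ρ => ∑ x, ρ x x • ν x

/-- The maximally entangled state of Schmidt rank `|ι|` on `ι × ι`. -/
def maxEnt (ι : Type) [Fintype ι] [DecidableEq ι] : Matrix (ι × ι) (ι × ι) ℂ :=
  fun p q => if p.1 = p.2 ∧ q.1 = q.2 then ((Fintype.card ι : ℂ))⁻¹ else 0

/-- An `(m+1)`-round adaptive channel discrimination protocol: registers `R_0, …, R_m`,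
a shared initial state, adaptive channels between channel uses, and a final measurement. -/
structure Protocol (ι κ : Type) [Fintype ι] [DecidableEq ι] [Fintype κ] [DecidableEq κ]
    (m : ℕ) where
  r : ℕ → ℕ
  init : Matrix (Fin (r 0) × ι) (Fin (r 0) × ι) ℂ
  init_density : IsDensity init
  adapt : ∀ i : ℕ, Matrix (Fin (r i) × κ) (Fin (r i) × κ) ℂ →
      Matrix (Fin (r (i + 1)) × ι) (Fin (r (i + 1)) × ι) ℂ
  adapt_channel : ∀ i, i < m → IsChannel (adapt i)
  meas : Matrix (Fin (r m) × κ) (Fin (r m) × κ) ℂ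
  meas_psd : meas.PosSemidef
  meas_le_one : ((1 : Matrix (Fin (r m) × κ) (Fin (r m) × κ) ℂ) - meas).PosSemidef

namespace Protocol

variable {ι κ : Type} [Fintype ι] [DecidableEq ι] [Fintype κ] [DecidableEq κ] {m : ℕ}

/-- The state on `R_i ⊗ A` just before the `(i+1)`-st channel use, when the channel is `Ch`. -/
def evolve (P : Protocol ι κ m) (Ch : Matrix ι ι ℂ → Matrix κ κ ℂ) :
    (i : ℕ) → Matrix (Fin (P.r i) × ι) (Fin (P.r i) × ι) ℂ
  | 0 => P.init
  | (i + 1) => P.adapt i (idTensor Ch (P.evolve Ch i))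

/-- The final state on `R_m ⊗ B` after all `m + 1` channel uses. -/
def final (P : Protocol ι κ m) (Ch : Matrix ι ι ℂ → Matrix κ κ ℂ) :
    Matrix (Fin (P.r m) × κ) (Fin (P.r m) × κ) ℂ :=
  idTensor Ch (P.evolve Ch m)

/-- The probability of accepting (deciding for the null hypothesis). -/
def acceptProb (P : Protocol ι κ m) (Ch : Matrix ι ι ℂ → Matrix κ κ ℂ) : ℝ :=
  ((P.meas * P.final Ch).trace).re

/-- The type I error probability `Tr[(I − Q) ρ'⁽ⁿ⁾]`. -/
def typeI (P : Protocol ι κ m) (N : Matrix ι ι ℂ → Matrix κ κ ℂ) : ℝ :=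
  ((((1 : Matrix (Fin (P.r m) × κ) (Fin (P.r m) × κ) ℂ) - P.meas) * P.final N).trace).re

/-- The type II error probability `Tr[Q τ'⁽ⁿ⁾]`. -/
def typeII (P : Protocol ι κ m) (M : Matrix ι ι ℂ → Matrix κ κ ℂ) : ℝ :=
  ((P.meas * P.final M).trace).re

end Protocol

/-- The binary (classical) state `diag(p, 1−p)`. -/
def binState (p : ℝ) : Matrix (Fin 2) (Fin 2) ℂ :=
  Matrix.diagonal (fun i => if i = 0 then (p : ℂ) else ((1 - p : ℝ) : ℂ))

/-- The binary entropy `h₂(ε)`. -/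
def h2 (ε : ℝ) : ℝ := -(ε * Real.logb 2 ε) - (1 - ε) * Real.logb 2 (1 - ε)

/-- `ζ_n(ε, N, M)` with `n = m + 1`: the optimal type II error exponent among all
`(m+1)`-round adaptive protocols with type I error at most `ε`. -/
def steinExp {ι κ : Type} [Fintype ι] [DecidableEq ι] [Fintype κ] [DecidableEq κ]
    (N M : Matrix ι ι ℂ → Matrix κ κ ℂ) (m : ℕ) (ε : ℝ) : EReal :=
  ⨆ (P : Protocol ι κ m) (_ : P.typeI N ≤ ε),
    (((m + 1 : ℝ))⁻¹ : EReal) * negLog2 (P.typeII M)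

/-- Partial trace over the (left) reference system. -/
def ptraceLeft {R ι : Type} [Fintype R] (ψ : Matrix (R × ι) (R × ι) ℂ) : Matrix ι ι ℂ :=
  fun a b => ∑ r, ψ (r, a) (r, b)

/-- The energy-constrained generalized channel divergence. -/
def eChannelDiv (D : DivFam) {ι κ : Type} [Fintype ι] [DecidableEq ι] [Fintype κ] [DecidableEq κ]
    (H : Matrix ι ι ℂ) (E : ℝ) (N M : Matrix ι ι ℂ → Matrix κ κ ℂ) : EReal :=
  ⨆ (R : ℕ) (ψ : Matrix (Fin R × ι) (Fin R × ι) ℂ) (_ : IsDensity ψ)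
    (_ : ((H * ptraceLeft ψ).trace).re ≤ E),
      D (Fin R × κ) (idTensor N ψ) (idTensor M ψ)

/-- The energy-constrained amortized channel divergence. -/
def eAmortizedDiv (D : DivFam) {ι κ : Type} [Fintype ι] [DecidableEq ι] [Fintype κ] [DecidableEq κ]
    (H : Matrix ι ι ℂ) (E : ℝ) (N M : Matrix ι ι ℂ → Matrix κ κ ℂ) : EReal :=
  ⨆ (R : ℕ) (ρ : Matrix (Fin R × ι) (Fin R × ι) ℂ) (σ : Matrix (Fin R × ι) (Fin R × ι) ℂ)
    (_ : IsDensity ρ) (_ : IsDensity σ)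
    (_ : ((H * ptraceLeft ρ).trace).re ≤ E) (_ : ((H * ptraceLeft σ).trace).re ≤ E),
      D (Fin R × κ) (idTensor N ρ) (idTensor M σ) - D (Fin R × ι) ρ σ

/-- `sup_α(ρ/σ)`: supremum of `Tr[Λρ]/Tr[Λσ]` over Hermitian `Λ` with `α⁻¹ I ≤ Λ ≤ I`. -/
def hilbertSup {ι : Type} [Fintype ι] [DecidableEq ι] (α : ℝ) (ρ σ : Matrix ι ι ℂ) : ℝ :=
  sSup { t : ℝ | ∃ Λ : Matrix ι ι ℂ, Λ.IsHermitian ∧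
    (Λ - (α⁻¹ : ℝ) • (1 : Matrix ι ι ℂ)).PosSemidef ∧
    ((1 : Matrix ι ι ℂ) - Λ).PosSemidef ∧
    t = ((Λ * ρ).trace).re / ((Λ * σ).trace).re }

/-- The Hilbert `α`-divergence `H_α(ρ‖σ)`, with `H₁(ρ‖σ) = ‖ρ−σ‖₁ / (2 ln 2)`. -/
def hilbertDiv {ι : Type} [Fintype ι] [DecidableEq ι] (α : ℝ) (ρ σ : Matrix ι ι ℂ) : ℝ :=
  if α = 1 then (2 * Real.log 2)⁻¹ * traceNorm (ρ - σ)
  else (α / (α - 1)) * Real.logb 2 (hilbertSup α ρ σ)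

/-! With reference system `R`, the map `id_R ⊗ Θ(Ψ)` factors as
`(id_R ⊗ Ω) ∘ (id_{R×E} ⊗ Ψ) ∘ (id_R ⊗ Λ)` up to reordering tensor factors: the environment `E`
joins the reference. Hence for input states `ρ, σ` the pre-processed states `ρ', σ'` compete in the
supremum defining `D^A(N‖M)`; data processing under the post-processing bounds the first term of
`D(Θ(N)ρ‖Θ(M)σ) − D(ρ‖σ)` by `D(Nρ'‖Mσ')`, and under the pre-processing bounds `D(ρ'‖σ')` by
`D(ρ‖σ)`. That `R × E` is not of the form `Fin n` is harmless: relabelling the reference is a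
reversible channel, so it leaves every divergence unchanged. -/

section IdTensor

variable {ι κ : Type}

theorem idTensor_submatrix_prodCongr {R S : Type} (Φ : Matrix ι ι ℂ → Matrix κ κ ℂ) (e : S ≃ R)
    (X : Matrix (R × ι) (R × ι) ℂ) :
    idTensor Φ (X.submatrix (e.prodCongr (Equiv.refl ι)) (e.prodCongr (Equiv.refl ι))) =
      (idTensor Φ X).submatrix (e.prodCongr (Equiv.refl κ)) (e.prodCongr (Equiv.refl κ)) :=
  rfl

theorem idTensor_idTensor {R S : Type} (Φ : Matrix ι ι ℂ → Matrix κ κ ℂ)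
    (X : Matrix (S × (R × ι)) (S × (R × ι)) ℂ) :
    idTensor (idTensor Φ) X =
      (idTensor Φ (X.submatrix (Equiv.prodAssoc S R ι) (Equiv.prodAssoc S R ι))).submatrix
        (Equiv.prodAssoc S R κ).symm (Equiv.prodAssoc S R κ).symm :=
  rfl

theorem trace_idTensor [Fintype ι] [Fintype κ] {R : Type} [Fintype R]
    {Φ : Matrix ι ι ℂ → Matrix κ κ ℂ} (hΦ : ∀ X, (Φ X).trace = X.trace) (X : Matrix (R × ι) (R × ι) ℂ) :
    (idTensor Φ X).trace = X.trace := by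
  simp only [Matrix.trace, Matrix.diag, Fintype.sum_prod_type]
  exact Finset.sum_congr rfl fun r _ => hΦ fun a b => X (r, a) (r, b)

theorem isLinearMap_idTensor {R : Type} {Φ : Matrix ι ι ℂ → Matrix κ κ ℂ}
    (hΦ : IsLinearMap ℂ Φ) :
    IsLinearMap ℂ (idTensor Φ : Matrix (R × ι) (R × ι) ℂ → Matrix (R × κ) (R × κ) ℂ) where
  map_add X Y := by
    ext p q
    exact congrFun₂ (hΦ.map_add (fun a b => X (p.1, a) (q.1, b)) fun a b => Y (p.1, a) (q.1, b))
      p.2 q.2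
  map_smul c X := by
    ext p q
    exact congrFun₂ (hΦ.map_smul c fun a b => X (p.1, a) (q.1, b)) p.2 q.2

end IdTensor

namespace IsChannel

variable {ι κ μ : Type} [Fintype ι] [Fintype κ] [Fintype μ] {Φ : Matrix ι ι ℂ → Matrix κ κ ℂ}

theorem posSemidef_idTensor (hΦ : IsChannel Φ) {R : Type} [Fintype R]
    {X : Matrix (R × ι) (R × ι) ℂ} (hX : X.PosSemidef) : (idTensor Φ X).PosSemidef := by
  let e : Fin (Fintype.card R) ≃ R := (Fintype.equivFin R).symm
  rw [← Matrix.posSemidef_submatrix_equiv (e.prodCongr (Equiv.refl κ)),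
    ← idTensor_submatrix_prodCongr]
  exact hΦ.compPos _ _ (hX.submatrix _)

theorem map_isDensity (hΦ : IsChannel Φ) {ρ : Matrix ι ι ℂ} (hρ : IsDensity ρ) :
    IsDensity (Φ ρ) := by
  refine ⟨?_, (hΦ.tracePres ρ).trans hρ.2⟩
  have h := hΦ.posSemidef_idTensor (hρ.1.submatrix (Prod.snd : Unit × ι → ι))
  exact h.submatrix fun c : κ => ((), c)

theorem comp {Ψ : Matrix κ κ ℂ → Matrix μ μ ℂ} (hΦ : IsChannel Φ) (hΨ : IsChannel Ψ) :
    IsChannel fun X => Ψ (Φ X) where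
  linear := ((hΨ.linear.mk' Ψ).comp (hΦ.linear.mk' Φ)).isLinear
  tracePres X := (hΨ.tracePres _).trans (hΦ.tracePres X)
  compPos k X hX := hΨ.compPos k _ (hΦ.compPos k X hX)

theorem idTensor (hΦ : IsChannel Φ) {R : Type} [Fintype R] :
    IsChannel (idTensor Φ : Matrix (R × ι) (R × ι) ℂ → Matrix (R × κ) (R × κ) ℂ) where
  linear := isLinearMap_idTensor hΦ.linear
  tracePres := trace_idTensor hΦ.tracePres
  compPos k X hX := by
    rw [idTensor_idTensor]
    exact (hΦ.posSemidef_idTensor (hX.submatrix _)).submatrix _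

end IsChannel

theorem isChannel_submatrix {ι κ : Type} [Fintype ι] [Fintype κ] (e : κ ≃ ι) :
    IsChannel fun X : Matrix ι ι ℂ => X.submatrix e e where
  linear := ⟨fun _ _ => rfl, fun _ _ => rfl⟩
  tracePres X := e.sum_comp fun i => X i i
  compPos _ _ hX := hX.submatrix _

theorem DivDataProcessing.submatrix_eq {D : DivFam} (hD : DivDataProcessing D) {ι κ : Type}
    [Fintype ι] [DecidableEq ι] [Fintype κ] [DecidableEq κ] (e : κ ≃ ι) {ρ σ : Matrix ι ι ℂ}
    (hρ : IsDensity ρ) (hσ : IsDensity σ) :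
    D κ (ρ.submatrix e e) (σ.submatrix e e) = D ι ρ σ := by
  have he := isChannel_submatrix e
  refine le_antisymm (hD _ _ _ he ρ σ hρ hσ) ?_
  simpa using hD _ _ _ (isChannel_submatrix e.symm) _ _ (he.map_isDensity hρ) (he.map_isDensity hσ)

theorem le_amortizedDiv {D : DivFam} (hD : DivDataProcessing D) {ι κ : Type}
    [Fintype ι] [DecidableEq ι] [Fintype κ] [DecidableEq κ] {N M : Matrix ι ι ℂ → Matrix κ κ ℂ}
    (hN : IsChannel N) (hM : IsChannel M) {R : Type} [Fintype R] [DecidableEq R]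
    {ρ σ : Matrix (R × ι) (R × ι) ℂ} (hρ : IsDensity ρ) (hσ : IsDensity σ) :
    D (R × κ) (idTensor N ρ) (idTensor M σ) - D (R × ι) ρ σ ≤ amortizedDiv D N M := by
  let e : Fin (Fintype.card R) ≃ R := (Fintype.equivFin R).symm
  have he := isChannel_submatrix (e.prodCongr (Equiv.refl ι))
  refine le_iSup_of_le _ <| le_iSup_of_le _ <| le_iSup_of_le _ <|
    le_iSup_of_le (he.map_isDensity hρ) <| le_iSup_of_le (he.map_isDensity hσ) (le_of_eq ?_)
  rw [idTensor_submatrix_prodCongr, idTensor_submatrix_prodCongr,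
    hD.submatrix_eq _ (hN.idTensor.map_isDensity hρ) (hM.idTensor.map_isDensity hσ),
    hD.submatrix_eq _ hρ hσ]

def regroupEnv (R E ι : Type) : (R × E) × ι ≃ R × (ι × E) :=
  (Equiv.prodAssoc R E ι).trans ((Equiv.refl R).prodCongr (Equiv.prodComm E ι))

section Superchannel

variable {R ι κ γ δ E : Type}

def superchannelPre (Λ : Matrix γ γ ℂ → Matrix (ι × E) (ι × E) ℂ)
    (X : Matrix (R × γ) (R × γ) ℂ) : Matrix ((R × E) × ι) ((R × E) × ι) ℂ :=
  (idTensor Λ X).submatrix (regroupEnv R E ι) (regroupEnv R E ι)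

def superchannelPost (Ω : Matrix (κ × E) (κ × E) ℂ → Matrix δ δ ℂ)
    (Y : Matrix ((R × E) × κ) ((R × E) × κ) ℂ) : Matrix (R × δ) (R × δ) ℂ :=
  idTensor Ω (Y.submatrix (regroupEnv R E κ).symm (regroupEnv R E κ).symm)

theorem idTensor_superchannel (Λ : Matrix γ γ ℂ → Matrix (ι × E) (ι × E) ℂ)
    (Ψ : Matrix ι ι ℂ → Matrix κ κ ℂ) (Ω : Matrix (κ × E) (κ × E) ℂ → Matrix δ δ ℂ)
    (X : Matrix (R × γ) (R × γ) ℂ) :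
    idTensor (fun Y => Ω (tensorId Ψ (Λ Y))) X =
      superchannelPost Ω (idTensor Ψ (superchannelPre Λ X)) :=
  rfl

variable [Fintype R] [Fintype ι] [Fintype κ] [Fintype γ] [Fintype δ] [Fintype E]

theorem IsChannel.superchannelPre {Λ : Matrix γ γ ℂ → Matrix (ι × E) (ι × E) ℂ}
    (hΛ : IsChannel Λ) : IsChannel (superchannelPre Λ : Matrix (R × γ) (R × γ) ℂ → _) :=
  hΛ.idTensor.comp (isChannel_submatrix _)

theorem IsChannel.superchannelPost {Ω : Matrix (κ × E) (κ × E) ℂ → Matrix δ δ ℂ}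
    (hΩ : IsChannel Ω) : IsChannel (superchannelPost Ω : _ → Matrix (R × δ) (R × δ) ℂ) :=
  (isChannel_submatrix _).comp hΩ.idTensor

end Superchannel

theorem amortizedDiv_superchannel_le_general
    (D : DivFam) (hdp : DivDataProcessing D)
    {ι κ γ δ E : Type} [Fintype ι] [DecidableEq ι] [Fintype κ] [DecidableEq κ]
    [Fintype γ] [DecidableEq γ] [Fintype δ] [DecidableEq δ] [Fintype E]
    (N M : Matrix ι ι ℂ → Matrix κ κ ℂ) (hN : IsChannel N) (hM : IsChannel M)
    (Λ : Matrix γ γ ℂ → Matrix (ι × E) (ι × E) ℂ) (hΛ : IsChannel Λ)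
    (Ω : Matrix (κ × E) (κ × E) ℂ → Matrix δ δ ℂ) (hΩ : IsChannel Ω) :
    amortizedDiv D (fun X => Ω (tensorId N (Λ X))) (fun X => Ω (tensorId M (Λ X))) ≤
      amortizedDiv D N M := by
  refine iSup_le fun R => iSup_le fun ρ => iSup_le fun σ => iSup_le fun hρ => iSup_le fun hσ => ?_
  have hpre := hΛ.superchannelPre (R := Fin R)
  have hρ' := hpre.map_isDensity hρ
  have hσ' := hpre.map_isDensity hσ
  rw [idTensor_superchannel, idTensor_superchannel]
  calc _ ≤ D _ (idTensor N (superchannelPre Λ ρ)) (idTensor M (superchannelPre Λ σ)) -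
        D _ (superchannelPre Λ ρ) (superchannelPre Λ σ) :=
        EReal.sub_le_sub
          (hdp _ _ _ hΩ.superchannelPost _ _ (hN.idTensor.map_isDensity hρ')
            (hM.idTensor.map_isDensity hσ'))
          (hdp _ _ _ hpre ρ σ hρ hσ)
    _ ≤ amortizedDiv D N M := le_amortizedDiv hdp hN hM hρ' hσ'

/-- The amortized channel divergence obeys data processing under
superchannels `Θ(Ψ) = Ω ∘ (Ψ ⊗ id_E) ∘ Λ`. -/
theorem amortizedDiv_superchannel_le
    (D : DivFam) (hdp : DivDataProcessing D)
    {ι κ γ δ E : Type} [Fintype ι] [DecidableEq ι] [Fintype κ] [DecidableEq κ]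
    [Fintype γ] [DecidableEq γ] [Fintype δ] [DecidableEq δ] [Fintype E] [DecidableEq E]
    (N M : Matrix ι ι ℂ → Matrix κ κ ℂ) (hN : IsChannel N) (hM : IsChannel M)
    (Λ : Matrix γ γ ℂ → Matrix (ι × E) (ι × E) ℂ) (hΛ : IsChannel Λ)
    (Ω : Matrix (κ × E) (κ × E) ℂ → Matrix δ δ ℂ) (hΩ : IsChannel Ω) :
    amortizedDiv D (fun X => Ω (tensorId N (Λ X))) (fun X => Ω (tensorId M (Λ X))) ≤
      amortizedDiv D N M :=
  amortizedDiv_superchannel_le_general D hdp N M hN hM Λ hΛ Ω hΩ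
end
end

section
/- Let N, M : A → B be quantum channels. Then the max-relative entropy channel divergence is achieved by the maximally entangled state: D_max(N‖M) = D_max((id_R⊗N)(Φ_{RA}) ‖ (id_R⊗M)(Φ_{RA})), where Φ_{RA} is the maximally entangled state of Schmidt rank d_A on R⊗A with R a copy of A. -/
open scoped BigOperators ComplexOrder

noncomputable section

attribute [local instance] Classical.propDecidable

/-!
`id ⊗ N` and `id ⊗ M` commute with conjugations `C ⊗ 1` acting on the reference, and every
rank-one `|w⟩⟨w|` on `R ⊗ A` equals `d_A (W ⊗ 1) Φ (W ⊗ 1)†`, where `W` is the `R × A` coefficient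
matrix of `w`. So `2^λ (id ⊗ M)(Φ) - (id ⊗ N)(Φ) ≥ 0` implies the same inequality for every rank-one
input, hence for every `ρ ≥ 0`, a sum of rank-one terms: no input beats `Φ`. Conversely `Φ` is
itself an admissible input, with reference `Fin d_A`.
-/

open scoped Matrix Kronecker
open Matrix

section IdTensor

variable {R ι κ : Type}

theorem idTensor_apply (Φ : Matrix ι ι ℂ → Matrix κ κ ℂ) (X : Matrix (R × ι) (R × ι) ℂ)
    (p q : R × κ) : idTensor Φ X p q = Φ (of fun a c => X (p.1, a) (q.1, c)) p.2 q.2 := rfl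

theorem idTensor_sum {α : Type} (Ψ : Matrix ι ι ℂ →ₗ[ℂ] Matrix κ κ ℂ) (s : Finset α)
    (X : α → Matrix (R × ι) (R × ι) ℂ) :
    idTensor Ψ (∑ k ∈ s, X k) = ∑ k ∈ s, idTensor Ψ (X k) := by
  ext p q
  simp only [idTensor_apply, Matrix.sum_apply]
  rw [← Matrix.sum_apply, ← map_sum]
  refine congrArg (fun Y => Ψ Y p.2 q.2) ?_
  ext a c
  simp [Matrix.sum_apply]

theorem idTensor_smul (Ψ : Matrix ι ι ℂ →ₗ[ℂ] Matrix κ κ ℂ) (c : ℂ)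
    (X : Matrix (R × ι) (R × ι) ℂ) : idTensor Ψ (c • X) = c • idTensor Ψ X := by
  ext p q
  simp only [idTensor_apply, Matrix.smul_apply]
  rw [← Matrix.smul_apply, ← map_smul]
  rfl

variable [Fintype R] [Fintype ι] [DecidableEq ι] [Fintype κ] [DecidableEq κ]

theorem idTensor_kronecker_conj {R' : Type} (Ψ : Matrix ι ι ℂ →ₗ[ℂ] Matrix κ κ ℂ)
    (C : Matrix R' R ℂ) (X : Matrix (R × ι) (R × ι) ℂ) :
    idTensor Ψ ((C ⊗ₖ (1 : Matrix ι ι ℂ)) * X * (C ⊗ₖ (1 : Matrix ι ι ℂ))ᴴ) =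
      (C ⊗ₖ (1 : Matrix κ κ ℂ)) * idTensor Ψ X * (C ⊗ₖ (1 : Matrix κ κ ℂ))ᴴ := by
  ext ⟨r', b⟩ ⟨s', b'⟩
  have hblock :
      (of fun a c => ((C ⊗ₖ (1 : Matrix ι ι ℂ)) * X * (C ⊗ₖ (1 : Matrix ι ι ℂ))ᴴ) (r', a) (s', c))
        = ∑ r, ∑ s, (C r' r * star (C s' s)) • of fun a c => X (r, a) (s, c) := by
    ext a c
    simp only [mul_apply, kroneckerMap_apply, one_apply, mul_ite, mul_one, mul_zero, ite_mul,
      zero_mul, Fintype.sum_prod_type, Finset.sum_ite_eq, Finset.mem_univ, ↓reduceIte,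
      conjTranspose_apply, RCLike.star_def, apply_ite (starRingEnd ℂ), map_zero, Finset.sum_mul,
      of_apply, smul_of, Matrix.sum_apply, Pi.smul_apply, smul_eq_mul]
    rw [Finset.sum_comm]
    exact Finset.sum_congr rfl fun _ _ => Finset.sum_congr rfl fun _ _ => by ring
  rw [idTensor_apply, hblock]
  simp only [map_sum, map_smul, Matrix.sum_apply, Matrix.smul_apply, smul_eq_mul]
  simp only [RCLike.star_def, mul_apply, kroneckerMap_apply, one_apply, mul_ite, mul_one, mul_zero,
    idTensor_apply, ite_mul, zero_mul, Fintype.sum_prod_type, Finset.sum_ite_eq, Finset.mem_univ,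
    ↓reduceIte, conjTranspose_apply, apply_ite (starRingEnd ℂ), map_zero, Finset.sum_mul]
  rw [Finset.sum_comm]
  exact Finset.sum_congr rfl fun _ _ => Finset.sum_congr rfl fun _ _ => by ring

end IdTensor

section MaxEnt

variable {ι : Type} [Fintype ι] [DecidableEq ι]

theorem maxEnt_eq_smul_vecMulVec :
    maxEnt ι = (Fintype.card ι : ℂ)⁻¹ •
      vecMulVec (fun p : ι × ι => if p.1 = p.2 then (1 : ℂ) else 0)
        (star fun p : ι × ι => if p.1 = p.2 then (1 : ℂ) else 0) := by
  ext p q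
  simp only [maxEnt, ite_and, Matrix.smul_apply, vecMulVec_apply, Pi.star_apply, RCLike.star_def,
    apply_ite (starRingEnd ℂ), map_one, map_zero, mul_ite, mul_one, mul_zero, smul_eq_mul]
  split_ifs <;> rfl

theorem maxEnt_posSemidef : (maxEnt ι).PosSemidef := by
  rw [maxEnt_eq_smul_vecMulVec]
  exact (posSemidef_vecMulVec_self_star _).smul (by positivity)

variable [Nonempty ι]

theorem isDensity_maxEnt : IsDensity (maxEnt ι) := by
  have hd : (Fintype.card ι : ℂ) ≠ 0 := Nat.cast_ne_zero.mpr Fintype.card_ne_zero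
  refine ⟨maxEnt_posSemidef, ?_⟩
  simp [Matrix.trace, maxEnt, Fintype.sum_prod_type, hd]

theorem vecMulVec_eq_card_smul_conj_maxEnt {R : Type} (w : R × ι → ℂ) :
    vecMulVec w (star w) = (Fintype.card ι : ℂ) •
      ((of fun r i => w (r, i)) ⊗ₖ (1 : Matrix ι ι ℂ) * maxEnt ι *
        ((of fun r i => w (r, i)) ⊗ₖ (1 : Matrix ι ι ℂ))ᴴ) := by
  have hd : (Fintype.card ι : ℂ) ≠ 0 := Nat.cast_ne_zero.mpr Fintype.card_ne_zero
  ext p q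
  simp only [vecMulVec_apply, Pi.star_apply, RCLike.star_def, Matrix.smul_apply, mul_apply,
    kroneckerMap_apply, of_apply, one_apply, mul_ite, mul_one, mul_zero, maxEnt, ite_and, ite_mul,
    zero_mul, Fintype.sum_prod_type, Finset.sum_ite_eq, Finset.mem_univ, ↓reduceIte,
    Finset.sum_ite_irrel, Prod.mk.eta, Finset.sum_const_zero, conjTranspose_apply,
    apply_ite (starRingEnd ℂ), map_zero, Finset.sum_ite_eq', smul_eq_mul]
  field_simp

theorem posSemidef_idTensor_of_posSemidef_idTensor_maxEnt {R κ : Type} [Fintype R] [Fintype κ]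
    [DecidableEq κ] (Ψ : Matrix ι ι ℂ →ₗ[ℂ] Matrix κ κ ℂ)
    (hΨ : (idTensor Ψ (maxEnt ι)).PosSemidef) {ρ : Matrix (R × ι) (R × ι) ℂ}
    (hρ : ρ.PosSemidef) : (idTensor Ψ ρ).PosSemidef := by
  obtain ⟨m, v, rfl⟩ := posSemidef_iff_eq_sum_vecMulVec.mp hρ
  rw [idTensor_sum]
  refine posSemidef_sum _ fun k _ => ?_
  rw [vecMulVec_eq_card_smul_conj_maxEnt, idTensor_smul, idTensor_kronecker_conj]
  exact (hΨ.mul_mul_conjTranspose_same _).smul (Nat.cast_nonneg _)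

end MaxEnt

section Dmax

variable {m n : Type} [Fintype m] [Fintype n]

theorem Dmax_le_Dmax_of_forall {ρ σ : Matrix m m ℂ} {ρ' σ' : Matrix n n ℂ}
    (h : ∀ l : ℝ, ((2 : ℝ) ^ l • σ - ρ).PosSemidef → ((2 : ℝ) ^ l • σ' - ρ').PosSemidef) :
    Dmax ρ' σ' ≤ Dmax ρ σ :=
  le_iInf₂ fun l hl => iInf₂_le l (h l hl)

theorem Dmax_submatrix_equiv (e : m ≃ n) (ρ σ : Matrix n n ℂ) :
    Dmax (ρ.submatrix e e) (σ.submatrix e e) = Dmax ρ σ := by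
  have hsub (l : ℝ) : (2 : ℝ) ^ l • σ.submatrix e e - ρ.submatrix e e =
      ((2 : ℝ) ^ l • σ - ρ).submatrix e e := rfl
  simp only [Dmax, hsub, posSemidef_submatrix_equiv]

theorem IsDensity.submatrix_equiv {ρ : Matrix n n ℂ} (hρ : IsDensity ρ) (e : m ≃ n) :
    IsDensity (ρ.submatrix e e) :=
  ⟨hρ.1.submatrix e, by simpa [Matrix.trace, e.sum_comp (fun j => ρ j j)] using hρ.2⟩

end Dmax

section ChannelDiv

variable {R ι κ : Type} [Fintype R] [Fintype ι] [DecidableEq ι] [Fintype κ] [DecidableEq κ]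

theorem Dmax_idTensor_le_Dmax_idTensor_maxEnt [Nonempty ι] {N M : Matrix ι ι ℂ → Matrix κ κ ℂ}
    (hN : IsLinearMap ℂ N) (hM : IsLinearMap ℂ M) {ρ : Matrix (R × ι) (R × ι) ℂ}
    (hρ : ρ.PosSemidef) :
    Dmax (idTensor N ρ) (idTensor M ρ) ≤ Dmax (idTensor N (maxEnt ι)) (idTensor M (maxEnt ι)) :=
  Dmax_le_Dmax_of_forall fun l hl =>
    posSemidef_idTensor_of_posSemidef_idTensor_maxEnt ((2 : ℝ) ^ l • hM.mk' M - hN.mk' N) hl hρ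

theorem Dmax_idTensor_le_channelDiv (N M : Matrix ι ι ℂ → Matrix κ κ ℂ)
    {ρ : Matrix (R × ι) (R × ι) ℂ} (hρ : IsDensity ρ) :
    Dmax (idTensor N ρ) (idTensor M ρ) ≤ channelDiv DmaxFam N M := by
  let e := (Fintype.equivFin R).symm
  refine le_iSup_of_le _ <| le_iSup_of_le _ <|
    le_iSup_of_le (hρ.submatrix_equiv (e.prodCongr (.refl ι))) ?_
  -- `idTensor` commutes definitionally with relabelling the reference system.
  exact (Dmax_submatrix_equiv (e.prodCongr (.refl κ)) _ _).ge

end ChannelDiv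

/-- The max-relative entropy channel divergence is achieved by the maximally
entangled state. -/
theorem channelDiv_Dmax_eq_maxEnt
    {ι κ : Type} [Fintype ι] [DecidableEq ι] [Nonempty ι] [Fintype κ] [DecidableEq κ]
    (N M : Matrix ι ι ℂ → Matrix κ κ ℂ) (hN : IsChannel N) (hM : IsChannel M) :
    channelDiv DmaxFam N M = Dmax (idTensor N (maxEnt ι)) (idTensor M (maxEnt ι)) :=
  le_antisymm
    (iSup_le fun _ => iSup₂_le fun _ hρ =>
      Dmax_idTensor_le_Dmax_idTensor_maxEnt hN.linear hM.linear hρ.1)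
    (Dmax_idTensor_le_channelDiv N M isDensity_maxEnt)
end
end

section
/- Data-processed triangle inequality for the Hilbert α-divergence: let P : A → B be a positive, trace-preserving linear map on complex matrices (not necessarily completely positive), let ρ_A, σ_A be density matrices on A and ω_B a density matrix on B. Then for all α ≥ 1: H_α(P(ρ_A)‖ω_B) ≤ H_α(ρ_A‖σ_A) + H_α(P(σ_A)‖ω_B). -/
open scoped BigOperators ComplexOrder

noncomputable section

attribute [local instance] Classical.propDecidable

/-!
For `α > 1`: the trace dual `P†` of `P` is positive and unital, so it maps every `Λ` with
`α⁻¹ ≤ Λ ≤ 1` to another such operator, and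
`Tr[Λ P(ρ)] / Tr[Λ ω] = (Tr[P†(Λ) ρ] / Tr[P†(Λ) σ]) · (Tr[Λ P(σ)] / Tr[Λ ω])`.
Hence `sup_α(P(ρ)/ω) ≤ sup_α(ρ/σ) · sup_α(P(σ)/ω)`, and taking logarithms gives the claim.

For `α = 1` it is the triangle inequality for the trace norm combined with its contractivity
under `P`. Both come from `‖X‖₁ = min {Tr Y + Tr Z : X = Y - Z, Y, Z ≥ 0}` for Hermitian `X`,
the minimum being attained at the positive and negative parts of `X`: `P` maps such a
decomposition of `X` to one of `P(X)` with the same traces.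
-/

open Matrix
open scoped MatrixOrder ComplexStarModule

section TraceNorm

variable {n : Type} [Fintype n] [DecidableEq n]

lemma hermFun_eq_cfc {A : Matrix n n ℂ} (hA : A.IsHermitian) (f : ℝ → ℝ) :
    hermFun f A = cfc f A := by
  rw [hermFun, dif_pos hA, hA.cfc_eq, IsHermitian.cfc, Unitary.conjStarAlgAut_apply]
  rfl

lemma traceNorm_eq_re_trace_cfc_abs {X : Matrix n n ℂ} (hX : X.IsHermitian) :
    traceNorm X = (cfc (fun x : ℝ => |x|) X).trace.re := by
  have hsq : Xᴴ * X = X ^ 2 := by rw [hX.eq, sq]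
  have hXX : (X ^ 2).IsHermitian := hsq ▸ (posSemidef_conjTranspose_mul_self X).isHermitian
  rw [traceNorm, matPow, hsq, hermFun_eq_cfc hXX,
    ← cfc_comp_pow _ 2 X ((X.finite_real_spectrum.image _).continuousOn _) hX.isSelfAdjoint]
  refine congrArg (fun M : Matrix n n ℂ => M.trace.re) (cfc_congr fun x _ => ?_)
  rcases eq_or_ne x 0 with rfl | hx
  · simp
  · simp only [hx, pow_eq_zero_iff, two_ne_zero, if_false, ne_eq, not_false_eq_true]
    rw [Real.rpow_eq_pow, ← Real.sqrt_eq_rpow, Real.sqrt_sq_eq_abs]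

lemma Matrix.PosSemidef.trace_mul_nonneg {A B : Matrix n n ℂ} (hA : A.PosSemidef)
    (hB : B.PosSemidef) : 0 ≤ (A * B).trace := by
  obtain ⟨C, rfl⟩ := CStarAlgebra.nonneg_iff_eq_star_mul_self.mp hA.nonneg
  rw [mul_assoc, trace_mul_comm, mul_assoc, ← mul_assoc C]
  exact (hB.mul_mul_conjTranspose_same C).trace_nonneg

lemma re_trace_mul_le_re_trace_mul {A B Y : Matrix n n ℂ} (hAB : A ≤ B) (hY : Y.PosSemidef) :
    (A * Y).trace.re ≤ (B * Y).trace.re := by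
  have h := (Complex.nonneg_iff.mp (PosSemidef.trace_mul_nonneg hAB hY)).1
  rw [sub_mul, trace_sub, Complex.sub_re] at h
  linarith

lemma exists_traceNorm_eq_re_trace_mul {X : Matrix n n ℂ} (hX : X.IsHermitian) :
    ∃ S : Matrix n n ℂ, -1 ≤ S ∧ S ≤ 1 ∧ traceNorm X = (S * X).trace.re := by
  let s : ℝ → ℝ := fun x => if 0 ≤ x then 1 else -1
  have hs : ∀ x, s x = -1 ∨ s x = 1 := fun x => by by_cases h : 0 ≤ x <;> simp [s, h]
  have hcont : ∀ f : ℝ → ℝ, ContinuousOn f (spectrum ℝ X) := X.finite_real_spectrum.continuousOn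
  refine ⟨cfc s X, ?_, ?_, ?_⟩
  · simpa using algebraMap_le_cfc s (-1) X (fun x _ => by rcases hs x with h | h <;> simp [h])
      (hcont s)
  · exact cfc_le_one s X (fun x _ => by rcases hs x with h | h <;> simp [h])
  · have habs : cfc (fun x : ℝ => |x|) X = cfc s X * X := by
      conv_rhs => enter [2]; rw [← cfc_id' ℝ X]
      rw [← cfc_mul s _ X (hcont _) (hcont _)]
      refine cfc_congr fun x _ => ?_
      by_cases h : 0 ≤ x
      · simp [s, h, abs_of_nonneg h]
      · simp [s, h, abs_of_neg (not_le.mp h)]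
    rw [traceNorm_eq_re_trace_cfc_abs hX, habs]

lemma traceNorm_le_of_eq_sub {X Y Z : Matrix n n ℂ} (hX : X.IsHermitian) (hY : Y.PosSemidef)
    (hZ : Z.PosSemidef) (hXYZ : X = Y - Z) : traceNorm X ≤ Y.trace.re + Z.trace.re := by
  obtain ⟨S, hS₁, hS₂, hS⟩ := exists_traceNorm_eq_re_trace_mul hX
  have hY' := re_trace_mul_le_re_trace_mul hS₂ hY
  have hZ' := re_trace_mul_le_re_trace_mul hS₁ hZ
  rw [hS, hXYZ, mul_sub, trace_sub, Complex.sub_re]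
  simp only [one_mul, neg_mul, trace_neg, Complex.neg_re] at hY' hZ'
  linarith

lemma exists_posSemidef_sub_eq_traceNorm {X : Matrix n n ℂ} (hX : X.IsHermitian) :
    ∃ Y Z : Matrix n n ℂ, Y.PosSemidef ∧ Z.PosSemidef ∧ X = Y - Z ∧
      traceNorm X = Y.trace.re + Z.trace.re := by
  have hcont : ∀ f : ℝ → ℝ, ContinuousOn f (spectrum ℝ X) := X.finite_real_spectrum.continuousOn
  refine ⟨cfc (fun x : ℝ => x⁺) X, cfc (fun x : ℝ => x⁻) X,
    nonneg_iff_posSemidef.mp (cfc_nonneg fun x _ => posPart_nonneg x),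
    nonneg_iff_posSemidef.mp (cfc_nonneg fun x _ => negPart_nonneg x), ?_, ?_⟩
  · rw [← cfc_sub _ _ X (hcont _) (hcont _)]
    conv_lhs => rw [← cfc_id' ℝ X]
    exact cfc_congr fun x _ => (posPart_sub_negPart x).symm
  · rw [← Complex.add_re, ← trace_add, ← cfc_add X _ _ (hcont _) (hcont _),
      traceNorm_eq_re_trace_cfc_abs hX]
    exact congrArg (fun M : Matrix n n ℂ => M.trace.re)
      (cfc_congr fun x _ => (posPart_add_negPart x).symm)

lemma traceNorm_add_le {A B : Matrix n n ℂ} (hA : A.IsHermitian) (hB : B.IsHermitian) :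
    traceNorm (A + B) ≤ traceNorm A + traceNorm B := by
  obtain ⟨Y₁, Z₁, hY₁, hZ₁, rfl, hA'⟩ := exists_posSemidef_sub_eq_traceNorm hA
  obtain ⟨Y₂, Z₂, hY₂, hZ₂, rfl, hB'⟩ := exists_posSemidef_sub_eq_traceNorm hB
  calc traceNorm (Y₁ - Z₁ + (Y₂ - Z₂)) ≤ (Y₁ + Y₂).trace.re + (Z₁ + Z₂).trace.re :=
        traceNorm_le_of_eq_sub (hA.add hB) (hY₁.add hY₂) (hZ₁.add hZ₂) (by abel)
    _ = traceNorm (Y₁ - Z₁) + traceNorm (Y₂ - Z₂) := by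
        rw [hA', hB', trace_add, trace_add, Complex.add_re, Complex.add_re]
        ring

end TraceNorm

lemma IsDensity.map {ι κ : Type} [Fintype ι] [Fintype κ]
    (Φ : Matrix ι ι ℂ →ₗ[ℂ] Matrix κ κ ℂ)
    (hpos : ∀ X : Matrix ι ι ℂ, X.PosSemidef → (Φ X).PosSemidef)
    (htr : ∀ X : Matrix ι ι ℂ, (Φ X).trace = X.trace) {ρ : Matrix ι ι ℂ} (hρ : IsDensity ρ) :
    IsDensity (Φ ρ) :=
  ⟨hpos ρ hρ.1, (htr ρ).trans hρ.2⟩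

section HilbertSup

variable {n : Type} [Fintype n] [DecidableEq n] {α : ℝ} {ρ σ : Matrix n n ℂ}

lemma re_trace_mul_le_one (hρ : IsDensity ρ) {Λ : Matrix n n ℂ} (hΛ : Λ ≤ 1) :
    (Λ * ρ).trace.re ≤ 1 := by
  simpa [hρ.2] using re_trace_mul_le_re_trace_mul hΛ hρ.1

lemma le_re_trace_mul_of_smul_one_le (hρ : IsDensity ρ) {c : ℝ} {Λ : Matrix n n ℂ}
    (hΛ : c • 1 ≤ Λ) : c ≤ (Λ * ρ).trace.re := by
  simpa [hρ.2] using re_trace_mul_le_re_trace_mul hΛ hρ.1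

lemma inv_smul_one_le_one (hα : 1 ≤ α) : α⁻¹ • (1 : Matrix n n ℂ) ≤ 1 :=
  smul_le_of_le_one_left (nonneg_iff_posSemidef.mpr PosSemidef.one) (inv_le_one_of_one_le₀ hα)

lemma le_hilbertSup (hα : 0 < α) (hρ : IsDensity ρ) (hσ : IsDensity σ) {Λ : Matrix n n ℂ}
    (hΛ : Λ.IsHermitian) (hlo : α⁻¹ • 1 ≤ Λ) (hhi : Λ ≤ 1) :
    (Λ * ρ).trace.re / (Λ * σ).trace.re ≤ hilbertSup α ρ σ := by
  refine le_csSup ⟨α, ?_⟩ ⟨Λ, hΛ, hlo, hhi, rfl⟩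
  rintro _ ⟨Λ, -, hlo, hhi, rfl⟩
  calc (Λ * ρ).trace.re / (Λ * σ).trace.re ≤ 1 / α⁻¹ :=
        div_le_div₀ zero_le_one (re_trace_mul_le_one hρ hhi) (inv_pos.mpr hα)
          (le_re_trace_mul_of_smul_one_le hσ hlo)
    _ = α := by rw [one_div, inv_inv]

lemma one_le_hilbertSup (hα : 1 ≤ α) (hρ : IsDensity ρ) (hσ : IsDensity σ) :
    1 ≤ hilbertSup α ρ σ := by
  simpa [hρ.2, hσ.2] using le_hilbertSup (zero_lt_one.trans_le hα) hρ hσ isHermitian_one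
    (inv_smul_one_le_one hα) le_rfl

lemma hilbertSup_le (hα : 1 ≤ α) {c : ℝ}
    (h : ∀ Λ : Matrix n n ℂ, Λ.IsHermitian → α⁻¹ • 1 ≤ Λ → Λ ≤ 1 →
      (Λ * ρ).trace.re / (Λ * σ).trace.re ≤ c) :
    hilbertSup α ρ σ ≤ c := by
  refine csSup_le
    ⟨_, 1, isHermitian_one, inv_smul_one_le_one hα, (le_refl (1 : Matrix n n ℂ) :), rfl⟩ ?_
  rintro _ ⟨Λ, hΛ, hlo, hhi, rfl⟩
  exact h Λ hΛ hlo hhi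

end HilbertSup

section PositiveMap

variable {ι κ : Type} [Fintype ι] [DecidableEq ι] (Φ : Matrix ι ι ℂ →ₗ[ℂ] Matrix κ κ ℂ)

lemma isHermitian_map (hpos : ∀ X : Matrix ι ι ℂ, X.PosSemidef → (Φ X).PosSemidef)
    {X : Matrix ι ι ℂ} (hX : X.IsHermitian) : (Φ X).IsHermitian := by
  obtain ⟨Y, Z, hY, hZ, rfl, -⟩ := exists_posSemidef_sub_eq_traceNorm hX
  rw [map_sub]
  exact (hpos Y hY).isHermitian.sub (hpos Z hZ).isHermitian

lemma map_conjTranspose (hpos : ∀ X : Matrix ι ι ℂ, X.PosSemidef → (Φ X).PosSemidef)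
    (X : Matrix ι ι ℂ) : Φ Xᴴ = (Φ X)ᴴ := by
  have hre := isHermitian_map Φ hpos (ℜ X).2
  have him := isHermitian_map Φ hpos (ℑ X).2
  rw [← star_eq_conjTranspose, ← star_eq_conjTranspose]
  conv_lhs => rw [← realPart_add_I_smul_imaginaryPart X]
  conv_rhs => rw [← realPart_add_I_smul_imaginaryPart X]
  simp only [star_add, star_smul, map_add, map_smul, (ℜ X).2.star_eq, (ℑ X).2.star_eq,
    hre.isSelfAdjoint.star_eq, him.isSelfAdjoint.star_eq]

variable [Fintype κ]

def traceDual : Matrix κ κ ℂ →ₗ[ℂ] Matrix ι ι ℂ where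
  toFun Λ := of fun i j => (Λ * Φ (single j i 1)).trace
  map_add' _ _ := by ext; simp [add_mul]
  map_smul' _ _ := by ext; simp

lemma trace_traceDual_mul (Λ : Matrix κ κ ℂ) (X : Matrix ι ι ℂ) :
    (traceDual Φ Λ * X).trace = (Λ * Φ X).trace := by
  induction X using Matrix.induction_on' with
  | h_zero => simp
  | h_add X Y hX hY => simp only [mul_add, map_add, trace_add, hX, hY]
  | h_std_basis i j x =>
    have hx : single i j x = x • single i j 1 := by rw [smul_single, smul_eq_mul, mul_one]
    rw [hx, map_smul, mul_smul_comm, mul_smul_comm, trace_smul, trace_smul, trace_mul_single]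
    simp [traceDual]

lemma isHermitian_traceDual (hpos : ∀ X : Matrix ι ι ℂ, X.PosSemidef → (Φ X).PosSemidef)
    {Λ : Matrix κ κ ℂ} (hΛ : Λ.IsHermitian) : (traceDual Φ Λ).IsHermitian := by
  ext i j
  simp only [conjTranspose_apply, traceDual, LinearMap.coe_mk, AddHom.coe_mk, of_apply]
  rw [← trace_conjTranspose, conjTranspose_mul, hΛ.eq, ← map_conjTranspose Φ hpos,
    conjTranspose_single, star_one, trace_mul_comm]

lemma posSemidef_traceDual (hpos : ∀ X : Matrix ι ι ℂ, X.PosSemidef → (Φ X).PosSemidef)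
    {Λ : Matrix κ κ ℂ} (hΛ : Λ.PosSemidef) : (traceDual Φ Λ).PosSemidef := by
  refine .of_dotProduct_mulVec_nonneg (isHermitian_traceDual Φ hpos hΛ.isHermitian) fun v => ?_
  have hv : star v ⬝ᵥ (traceDual Φ Λ *ᵥ v) = (traceDual Φ Λ * vecMulVec v (star v)).trace := by
    rw [mul_vecMulVec, trace_vecMulVec, dotProduct_comm]
  rw [hv, trace_traceDual_mul]
  exact hΛ.trace_mul_nonneg (hpos _ (posSemidef_vecMulVec_self_star v))

lemma traceDual_mono (hpos : ∀ X : Matrix ι ι ℂ, X.PosSemidef → (Φ X).PosSemidef)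
    {A B : Matrix κ κ ℂ} (hAB : A ≤ B) : traceDual Φ A ≤ traceDual Φ B := by
  rw [le_iff, ← map_sub]
  exact posSemidef_traceDual Φ hpos hAB

variable [DecidableEq κ]

lemma traceDual_one (htr : ∀ X : Matrix ι ι ℂ, (Φ X).trace = X.trace) :
    traceDual Φ 1 = 1 :=
  ext_iff_trace_mul_right.mpr fun X => by rw [trace_traceDual_mul, one_mul, one_mul, htr]

lemma traceNorm_map_le (hpos : ∀ X : Matrix ι ι ℂ, X.PosSemidef → (Φ X).PosSemidef)
    (htr : ∀ X : Matrix ι ι ℂ, (Φ X).trace = X.trace) {X : Matrix ι ι ℂ} (hX : X.IsHermitian) :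
    traceNorm (Φ X) ≤ traceNorm X := by
  obtain ⟨Y, Z, hY, hZ, rfl, hYZ⟩ := exists_posSemidef_sub_eq_traceNorm hX
  rw [hYZ, ← htr Y, ← htr Z]
  exact traceNorm_le_of_eq_sub (isHermitian_map Φ hpos hX) (hpos Y hY) (hpos Z hZ) (map_sub ..)

lemma traceNorm_map_sub_le (hpos : ∀ X : Matrix ι ι ℂ, X.PosSemidef → (Φ X).PosSemidef)
    (htr : ∀ X : Matrix ι ι ℂ, (Φ X).trace = X.trace) {ρ σ : Matrix ι ι ℂ} {ω : Matrix κ κ ℂ}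
    (hρ : ρ.IsHermitian) (hσ : σ.IsHermitian) (hω : ω.IsHermitian) :
    traceNorm (Φ ρ - ω) ≤ traceNorm (ρ - σ) + traceNorm (Φ σ - ω) :=
  calc traceNorm (Φ ρ - ω) = traceNorm (Φ (ρ - σ) + (Φ σ - ω)) := by
        rw [map_sub, sub_add_sub_cancel]
    _ ≤ traceNorm (Φ (ρ - σ)) + traceNorm (Φ σ - ω) :=
        traceNorm_add_le (isHermitian_map Φ hpos (hρ.sub hσ))
          ((isHermitian_map Φ hpos hσ).sub hω)
    _ ≤ traceNorm (ρ - σ) + traceNorm (Φ σ - ω) :=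
        add_le_add_left (traceNorm_map_le Φ hpos htr (hρ.sub hσ)) _

lemma hilbertSup_map_le_mul (hpos : ∀ X : Matrix ι ι ℂ, X.PosSemidef → (Φ X).PosSemidef)
    (htr : ∀ X : Matrix ι ι ℂ, (Φ X).trace = X.trace) {α : ℝ} (hα : 1 ≤ α)
    {ρ σ : Matrix ι ι ℂ} {ω : Matrix κ κ ℂ} (hρ : IsDensity ρ) (hσ : IsDensity σ)
    (hω : IsDensity ω) :
    hilbertSup α (Φ ρ) ω ≤ hilbertSup α ρ σ * hilbertSup α (Φ σ) ω := by
  have hα₀ : 0 < α := zero_lt_one.trans_le hα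
  have hΦσ := hσ.map Φ hpos htr
  refine hilbertSup_le hα fun Λ hΛ hlo hhi => ?_
  have hdual := le_hilbertSup hα₀ hρ hσ (isHermitian_traceDual Φ hpos hΛ)
    (by simpa [traceDual_one Φ htr] using traceDual_mono Φ hpos hlo)
    (traceDual_one Φ htr ▸ traceDual_mono Φ hpos hhi)
  rw [trace_traceDual_mul, trace_traceDual_mul] at hdual
  have hb : 0 < (Λ * Φ σ).trace.re :=
    (inv_pos.mpr hα₀).trans_le (le_re_trace_mul_of_smul_one_le hΦσ hlo)
  have hd : 0 < (Λ * ω).trace.re :=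
    (inv_pos.mpr hα₀).trans_le (le_re_trace_mul_of_smul_one_le hω hlo)
  calc (Λ * Φ ρ).trace.re / (Λ * ω).trace.re
      = (Λ * Φ ρ).trace.re / (Λ * Φ σ).trace.re * ((Λ * Φ σ).trace.re / (Λ * ω).trace.re) := by
        field_simp
    _ ≤ hilbertSup α ρ σ * hilbertSup α (Φ σ) ω :=
        mul_le_mul hdual (le_hilbertSup hα₀ hΦσ hω hΛ hlo hhi) (div_pos hb hd).le
          (zero_le_one.trans (one_le_hilbertSup hα hρ hσ))

end PositiveMap

/-- Data-processed triangle inequality for the Hilbert `α`-divergence: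
for a positive trace-preserving map `P` and `α ≥ 1`,
`H_α(P(ρ)‖ω) ≤ H_α(ρ‖σ) + H_α(P(σ)‖ω)`. -/
theorem hilbertDiv_data_processed_triangle
    {ι κ : Type} [Fintype ι] [DecidableEq ι] [Fintype κ] [DecidableEq κ]
    (P : Matrix ι ι ℂ → Matrix κ κ ℂ)
    (hlin : IsLinearMap ℂ P)
    (hpos : ∀ X : Matrix ι ι ℂ, X.PosSemidef → (P X).PosSemidef)
    (htr : ∀ X : Matrix ι ι ℂ, (P X).trace = X.trace)
    (ρ σ : Matrix ι ι ℂ) (hρ : IsDensity ρ) (hσ : IsDensity σ)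
    (ω : Matrix κ κ ℂ) (hω : IsDensity ω)
    (α : ℝ) (hα : 1 ≤ α) :
    hilbertDiv α (P ρ) ω ≤ hilbertDiv α ρ σ + hilbertDiv α (P σ) ω := by
  let Φ := hlin.mk' P
  by_cases hα₁ : α = 1
  · simp only [hilbertDiv, if_pos hα₁, ← mul_add]
    gcongr
    exact traceNorm_map_sub_le Φ hpos htr hρ.1.1 hσ.1.1 hω.1.1
  · have hα₁' : 0 < α - 1 := sub_pos.mpr (hα.lt_of_ne' hα₁)
    have h₀ := one_le_hilbertSup hα (hρ.map Φ hpos htr) hω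
    have h₁ := one_le_hilbertSup hα hρ hσ
    have h₂ := one_le_hilbertSup hα (hσ.map Φ hpos htr) hω
    simp only [hilbertDiv, if_neg hα₁, ← mul_add]
    rw [← Real.logb_mul (by positivity) (by positivity)]
    gcongr
    · exact one_lt_two
    · exact hilbertSup_map_le_mul Φ hpos htr hα hρ hσ hω

end
end
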